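/- arXiv:2511.06135 — 6 statements merged into one kernel-verified Lean document; each statement's English description precedes it below -/
import Mathlib

section
/- Let N be a Petri net and let N' be obtained by replacing a transition t by a chain of k ≥ 2 fresh transitions t_1,…,t_k connected by fresh places p_{t_1},…,p_{t_{k−1}} (with F(p,t_1) = F(p,t) and F(t_k,p) = F(t,p) for every original place p, F(t_i, p_{t_i}) = F(p_{t_i}, t_{i+1}) = 1, and a control place p_ctrl that is consumed by t_1, produced by t_k, and self-looped with every other transition). Then: (1) every firing sequence σ of N from M corresponds to a firing sequence σ' of N' from the extended marking, obtained by replacing each occurrence of t by the block t_1 t_2 … t_k, reaching a marking agreeing with that reached by σ on all original places; and (2) conversely, every firing sequence of N' from the extended marking that returns the token to p_ctrl arises this way. -/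
structure PetriNet (P T : Type*) where
  pre : T → P → ℕ
  post : T → P → ℕ

def PetriNet.enabled {P T : Type*} (N : PetriNet P T) (M : P → ℕ) (t : T) : Prop :=
  ∀ p, N.pre t p ≤ M p

def PetriNet.fire {P T : Type*} (N : PetriNet P T) (M : P → ℕ) (t : T) : P → ℕ :=
  fun p => M p - N.pre t p + N.post t p

/-- `N.firesTo M σ M'` : the transition sequence `σ` is enabled at marking `M`
and firing it leads to marking `M'`. -/
def PetriNet.firesTo {P T : Type*} (N : PetriNet P T) : (P → ℕ) → List T → (P → ℕ) → Prop
  | M, [], M' => M' = M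
  | M, t :: σ, M' => N.enabled M t ∧ N.firesTo (N.fire M t) σ M'

/-- Parikh-validity of a policy `Pol`. -/
def ParikhValid {P T E : Type*} [DecidableEq E] (N : PetriNet P T) (lab : T → E)
    (M : P → ℕ) (ℓ : P → ℕ) (γ : E → ℕ) (Pol : Finset E) : Prop :=
  ∀ σ M', N.firesTo M σ M' → ∀ p, 0 < M' p →
    ℓ p ≤ ∑ a ∈ Pol, γ a * (σ.map lab).count a

/-- Indicator-validity of a policy `Pol`. -/
def IndicatorValid {P T E : Type*} [DecidableEq E] (N : PetriNet P T) (lab : T → E)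
    (M : P → ℕ) (ℓ : P → ℕ) (γ : E → ℕ) (Pol : Finset E) : Prop :=
  ∀ σ M', N.firesTo M σ M' → ∀ p, 0 < M' p →
    ℓ p ≤ ∑ a ∈ Pol, γ a * (if a ∈ σ.map lab then 1 else 0)

/-- The chain-replacement net: transition `t₀` is replaced by a chain of `k`
fresh transitions (`Sum.inr i` for `i : Fin k`) connected by `k-1` fresh chain
places (`Sum.inr (some j)`), together with a control place (`Sum.inr none`)
that is consumed by the first chain transition, produced by the last one, and
self-looped with every other transition. -/
def chainNet {P T : Type*} (N : PetriNet P T) (t₀ : T) (k : ℕ) :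
    PetriNet (Sum P (Option (Fin (k - 1)))) (Sum T (Fin k)) where
  pre := fun t q => match t, q with
    | Sum.inl s, Sum.inl p => N.pre s p
    | Sum.inl _, Sum.inr none => 1
    | Sum.inl _, Sum.inr (some _) => 0
    | Sum.inr i, Sum.inl p => if i.val = 0 then N.pre t₀ p else 0
    | Sum.inr i, Sum.inr none => if i.val = 0 then 1 else 0
    | Sum.inr i, Sum.inr (some j) => if i.val = j.val + 1 then 1 else 0
  post := fun t q => match t, q with
    | Sum.inl s, Sum.inl p => N.post s p
    | Sum.inl _, Sum.inr none => 1
    | Sum.inl _, Sum.inr (some _) => 0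
    | Sum.inr i, Sum.inl p => if i.val = k - 1 then N.post t₀ p else 0
    | Sum.inr i, Sum.inr none => if i.val = k - 1 then 1 else 0
    | Sum.inr i, Sum.inr (some j) => if i.val = j.val then 1 else 0

/-- The extended initial marking: one token on the control place, zero on the
fresh chain places, agreeing with `M` on original places. -/
def chainExt {P : Type*} (k : ℕ) (M : P → ℕ) : Sum P (Option (Fin (k - 1))) → ℕ :=
  fun q => match q with
    | Sum.inl p => M p
    | Sum.inr none => 1
    | Sum.inr (some _) => 0

/-- Replace each occurrence of `t₀` in a sequence by the block `t₁ … t_k`. -/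
def chainExpand {T : Type*} [DecidableEq T] (t₀ : T) (k : ℕ) (σ : List T) :
    List (Sum T (Fin k)) :=
  σ.foldr (fun s acc =>
    (if s = t₀ then (List.finRange k).map Sum.inr else [Sum.inl s]) ++ acc) []

section ChainAux

set_option linter.unusedSectionVars false

variable {P T : Type*} [DecidableEq T]

lemma PetriNet.firesTo_append (N : PetriNet P T) {M M₁ M₂ : P → ℕ} {σ₁ σ₂ : List T}
    (h₁ : N.firesTo M σ₁ M₁) (h₂ : N.firesTo M₁ σ₂ M₂) :
    N.firesTo M (σ₁ ++ σ₂) M₂ := by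
  induction σ₁ generalizing M with
  | nil => cases h₁; exact h₂
  | cons t σ ih => exact ⟨h₁.1, ih h₁.2⟩

/-- The intermediate marking after firing `t₁ … t_i` of the chain block. -/
def chainMid (N : PetriNet P T) (t₀ : T) (k : ℕ) (M : P → ℕ) (i : ℕ) :
    Sum P (Option (Fin (k - 1))) → ℕ :=
  fun q => match q with
    | Sum.inl p => M p - N.pre t₀ p
    | Sum.inr none => 0
    | Sum.inr (some j) => if j.val + 1 = i then 1 else 0

variable (N : PetriNet P T) (t₀ : T) {k : ℕ} (M : P → ℕ)

lemma chain_fire_inl (s : T) :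
    (chainNet N t₀ k).fire (chainExt k M) (Sum.inl s) = chainExt k (N.fire M s) := by
  funext q
  rcases q with p | (_ | j) <;> simp [chainNet, chainExt, PetriNet.fire]

lemma chain_enabled_inl (s : T) :
    (chainNet N t₀ k).enabled (chainExt k M) (Sum.inl s) ↔ N.enabled M s := by
  constructor
  · intro h p; exact h (Sum.inl p)
  · intro h q; rcases q with p | (_ | j)
    · exact h p
    · simp [chainNet, chainExt]
    · simp [chainNet, chainExt]

lemma chain_fire_first (hk : 2 ≤ k) {i : Fin k} (hi : i.val = 0) :
    (chainNet N t₀ k).fire (chainExt k M) (Sum.inr i) = chainMid N t₀ k M 1 := by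
  funext q
  rcases q with p | (_ | j) <;>
    simp only [chainNet, chainExt, chainMid, PetriNet.fire] <;>
    split_ifs <;> omega

lemma chain_fire_mid {i : Fin k} (hi : 0 < i.val) (hik : i.val + 1 < k) :
    (chainNet N t₀ k).fire (chainMid N t₀ k M i.val) (Sum.inr i) =
      chainMid N t₀ k M (i.val + 1) := by
  funext q
  rcases q with p | (_ | j) <;>
    simp only [chainNet, chainMid, PetriNet.fire] <;>
    split_ifs <;> omega

lemma chain_fire_last (hk : 2 ≤ k) {i : Fin k} (hi : i.val = k - 1) :
    (chainNet N t₀ k).fire (chainMid N t₀ k M i.val) (Sum.inr i) =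
      chainExt k (N.fire M t₀) := by
  funext q
  rcases q with p | (_ | j)
  · simp only [chainNet, chainMid, chainExt, PetriNet.fire]
    rw [hi, if_neg (by omega), if_pos rfl]
    rfl
  · simp only [chainNet, chainMid, chainExt, PetriNet.fire]
    split_ifs <;> omega
  · have hj := j.isLt
    simp only [chainNet, chainMid, chainExt, PetriNet.fire]
    split_ifs <;> omega

lemma chain_enabled_first (h : N.enabled M t₀) {i : Fin k} (hi : i.val = 0) :
    (chainNet N t₀ k).enabled (chainExt k M) (Sum.inr i) := by
  intro q
  rcases q with p | (_ | j)
  · simpa [chainNet, chainExt, hi] using h p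
  · simp [chainNet, chainExt, hi]
  · simp [chainNet, chainExt, hi]

lemma chain_enabled_mid {i : Fin k} (hi : 0 < i.val) :
    (chainNet N t₀ k).enabled (chainMid N t₀ k M i.val) (Sum.inr i) := by
  intro q
  rcases q with p | (_ | j) <;>
    simp only [chainNet, chainMid] <;>
    split_ifs <;> omega

lemma chain_only_enabled {i : ℕ} (hi : 0 < i) (hik : i < k)
    {u : Sum T (Fin k)} (h : (chainNet N t₀ k).enabled (chainMid N t₀ k M i) u) :
    ∃ j : Fin k, u = Sum.inr j ∧ j.val = i := by
  rcases u with s | j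
  · exfalso
    have := h (Sum.inr none)
    simp [chainNet, chainMid] at this
  · refine ⟨j, rfl, ?_⟩
    by_contra hne
    rcases Nat.eq_zero_or_pos j.val with h0 | h0
    · have := h (Sum.inr none)
      simp only [chainNet, chainMid] at this
      rw [if_pos h0] at this
      omega
    · have hlt : (j : ℕ) - 1 < k - 1 := by have := j.isLt; omega
      have := h (Sum.inr (some ⟨(j : ℕ) - 1, hlt⟩))
      simp only [chainNet, chainMid] at this
      split_ifs at this <;> omega

lemma chain_block_tail (hk : 2 ≤ k) :
    ∀ n i, i + n + 1 = k → 0 < i →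
      (chainNet N t₀ k).firesTo (chainMid N t₀ k M i)
        (((List.finRange k).drop i).map Sum.inr) (chainExt k (N.fire M t₀)) := by
  intro n
  induction n with
  | zero =>
    intro i hik hi
    have hik' : i = k - 1 := by omega
    rw [List.drop_eq_getElem_cons (by simp; omega),
        List.drop_eq_nil_of_le (by simp; omega), List.map_cons, List.map_nil]
    refine ⟨?_, ?_⟩
    · have := chain_enabled_mid N t₀ M
        (i := (List.finRange k)[i]'(by simp; omega)) (by simp; omega)
      simpa using this
    · have hval : ((List.finRange k)[i]'(by simp; omega)).val = i := by simp
      rw [show (chainMid N t₀ k M i) =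
          (chainMid N t₀ k M ((List.finRange k)[i]'(by simp; omega)).val) by rw [hval],
        chain_fire_last N t₀ M hk (by simp; omega)]
      rfl
  | succ n ih =>
    intro i hik hi
    rw [List.drop_eq_getElem_cons (by simp; omega), List.map_cons]
    refine ⟨?_, ?_⟩
    · have := chain_enabled_mid N t₀ M
        (i := (List.finRange k)[i]'(by simp; omega)) (by simp; omega)
      simpa using this
    · have hval : ((List.finRange k)[i]'(by simp; omega)).val = i := by simp
      rw [show (chainMid N t₀ k M i) =
          (chainMid N t₀ k M ((List.finRange k)[i]'(by simp; omega)).val) by rw [hval],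
        chain_fire_mid N t₀ M (by simp; omega) (by simp; omega), hval]
      exact ih (i + 1) (by omega) (by omega)

lemma chain_block_fires (hk : 2 ≤ k) (h : N.enabled M t₀) :
    (chainNet N t₀ k).firesTo (chainExt k M)
      ((List.finRange k).map Sum.inr) (chainExt k (N.fire M t₀)) := by
  have h0 := List.drop_eq_getElem_cons (l := List.finRange k) (i := 0) (by simp; omega)
  rw [List.drop_zero] at h0
  rw [h0, List.map_cons]
  refine ⟨chain_enabled_first N t₀ M h (by simp), ?_⟩
  rw [chain_fire_first N t₀ M hk (by simp)]
  exact chain_block_tail N t₀ M hk (k - 2) 1 (by omega) (by omega)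

lemma chainExpand_cons (s : T) (σ : List T) :
    chainExpand t₀ k (s :: σ) =
      (if s = t₀ then (List.finRange k).map Sum.inr else [Sum.inl s]) ++
        chainExpand t₀ k σ := rfl

lemma chain_block_complete (hk : 2 ≤ k) :
    ∀ (τ : List (Sum T (Fin k))) (i : ℕ), 0 < i → i < k →
      ∀ M₁, (chainNet N t₀ k).firesTo (chainMid N t₀ k M i) τ M₁ →
        M₁ (Sum.inr none) = 1 →
        ∃ τ', τ = ((List.finRange k).drop i).map Sum.inr ++ τ' ∧
          (chainNet N t₀ k).firesTo (chainExt k (N.fire M t₀)) τ' M₁ := by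
  intro τ
  induction τ with
  | nil =>
    intro i hi hik M₁ hf hc
    exfalso
    have : M₁ = chainMid N t₀ k M i := hf
    rw [this] at hc
    simp [chainMid] at hc
  | cons u τ ih =>
    intro i hi hik M₁ hf hc
    obtain ⟨hen, hrest⟩ := hf
    obtain ⟨j, rfl, hj⟩ := chain_only_enabled N t₀ M hi hik hen
    by_cases hlast : i = k - 1
    · rw [show chainMid N t₀ k M i = chainMid N t₀ k M j.val by rw [hj]] at hrest
      rw [chain_fire_last N t₀ M hk (by omega)] at hrest
      refine ⟨τ, ?_, hrest⟩
      rw [List.drop_eq_getElem_cons (by simp; omega),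
          List.drop_eq_nil_of_le (by simp; omega), List.map_cons, List.map_nil,
          List.singleton_append]
      congr 1
      apply congrArg
      apply Fin.ext
      simp [hj]
    · rw [show chainMid N t₀ k M i = chainMid N t₀ k M j.val by rw [hj]] at hrest
      rw [chain_fire_mid N t₀ M (by omega) (by omega), hj] at hrest
      obtain ⟨τ', hτ, hf'⟩ := ih (i + 1) (by omega) (by omega) M₁ hrest hc
      refine ⟨τ', ?_, hf'⟩
      rw [List.drop_eq_getElem_cons (l := List.finRange k) (i := i) (by simp; omega),
          List.map_cons, List.cons_append, hτ]
      congr 1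
      apply congrArg
      apply Fin.ext
      simp [hj]

lemma chain_reverse_aux (hk : 2 ≤ k) :
    ∀ (n : ℕ) (σ' : List (Sum T (Fin k))), σ'.length ≤ n →
      ∀ (M : P → ℕ) (M₁ : Sum P (Option (Fin (k - 1))) → ℕ),
      (chainNet N t₀ k).firesTo (chainExt k M) σ' M₁ →
      M₁ (Sum.inr none) = 1 →
      (∀ s : T, Sum.inl s ∈ σ' → s ≠ t₀) →
      ∃ (σ : List T) (M' : P → ℕ), N.firesTo M σ M' ∧
        σ' = chainExpand t₀ k σ ∧ ∀ p, M₁ (Sum.inl p) = M' p := by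
  intro n
  induction n with
  | zero =>
    intro σ' hlen M M₁ hf hc hmem
    obtain rfl := List.length_eq_zero_iff.mp (Nat.le_zero.mp hlen)
    exact ⟨[], M, rfl, rfl, fun p => by rw [show M₁ = chainExt k M from hf]; rfl⟩
  | succ n ih =>
    intro σ' hlen M M₁ hf hc hmem
    match σ' with
    | [] =>
      exact ⟨[], M, rfl, rfl, fun p => by rw [show M₁ = chainExt k M from hf]; rfl⟩
    | Sum.inl s :: rest =>
      obtain ⟨hen, hrest⟩ := hf
      rw [chain_fire_inl N t₀ M s] at hrest
      have hlenr : rest.length ≤ n := by simp at hlen; omega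
      obtain ⟨σ, M', h1, h2, h3⟩ := ih rest hlenr (N.fire M s) M₁ hrest hc
        (fun s' hs' => hmem s' (List.mem_cons_of_mem _ hs'))
      refine ⟨s :: σ, M', ⟨(chain_enabled_inl N t₀ M s).mp hen, h1⟩, ?_, h3⟩
      rw [chainExpand_cons, if_neg (hmem s (List.mem_cons_self)), h2]
      rfl
    | Sum.inr i :: rest =>
      obtain ⟨hen, hrest⟩ := hf
      have hi0 : (i : ℕ) = 0 := by
        by_contra h0
        have hlt : (i : ℕ) - 1 < k - 1 := by have := i.isLt; omega
        have := hen (Sum.inr (some ⟨(i : ℕ) - 1, hlt⟩))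
        simp only [chainNet, chainExt] at this
        rw [if_pos (by omega)] at this
        omega
      rw [chain_fire_first N t₀ M hk hi0] at hrest
      obtain ⟨τ', hτ, hf'⟩ := chain_block_complete N t₀ M hk rest 1 (by omega)
        (by omega) M₁ hrest hc
      have hlen' : τ'.length ≤ n := by
        have h1 : rest.length ≤ n := by simp at hlen; omega
        have h2 := congrArg List.length hτ
        simp at h2; omega
      have hmem' : ∀ s : T, Sum.inl s ∈ τ' → s ≠ t₀ := by
        intro s hs
        apply hmem s
        rw [hτ]
        exact List.mem_cons_of_mem _ (List.mem_append_right _ hs)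
      obtain ⟨σ, M', h1, h2, h3⟩ := ih τ' hlen' (N.fire M t₀) M₁ hf' hc hmem'
      have hent : N.enabled M t₀ := fun p => by
        have := hen (Sum.inl p); simpa [chainNet, chainExt, hi0] using this
      refine ⟨t₀ :: σ, M', ⟨hent, h1⟩, ?_, h3⟩
      rw [chainExpand_cons, if_pos rfl, hτ, h2]
      have h0 := List.drop_eq_getElem_cons (l := List.finRange k) (i := 0) (by simp; omega)
      rw [List.drop_zero] at h0
      conv_rhs => rw [h0, List.map_cons, List.cons_append]
      congr 1
      apply congrArg
      apply Fin.ext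
      simp [hi0]

end ChainAux

/-- (1) every firing sequence of `N` from `M` corresponds to the
firing sequence of the chain net obtained by expanding each occurrence of `t₀`
into the block `t₁ … t_k`, reaching the corresponding extended marking; and
(2) every firing sequence of the chain net from the extended marking that
returns the token to the control place arises in this way, the reached
markings agreeing on all original places. -/
theorem chainNet_correspondence {P T : Type*} [DecidableEq T]
    (N : PetriNet P T) (t₀ : T) (k : ℕ) (hk : 2 ≤ k) (M : P → ℕ) :
    (∀ (σ : List T) (M' : P → ℕ), N.firesTo M σ M' →
      (chainNet N t₀ k).firesTo (chainExt k M) (chainExpand t₀ k σ) (chainExt k M')) ∧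
    (∀ (σ' : List (Sum T (Fin k))) (M₁ : Sum P (Option (Fin (k - 1))) → ℕ),
      (chainNet N t₀ k).firesTo (chainExt k M) σ' M₁ →
      M₁ (Sum.inr none) = 1 →
      (∀ s : T, Sum.inl s ∈ σ' → s ≠ t₀) →
      ∃ (σ : List T) (M' : P → ℕ), N.firesTo M σ M' ∧
        σ' = chainExpand t₀ k σ ∧ ∀ p, M₁ (Sum.inl p) = M' p) := by
  constructor
  · intro σ
    induction σ generalizing M with
    | nil =>
      intro M' hf
      rw [show M' = M from hf]
      rfl
    | cons s σ ih =>
      intro M' hf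
      obtain ⟨hen, hrest⟩ := hf
      rw [chainExpand_cons]
      by_cases hs : s = t₀
      · subst hs
        rw [if_pos rfl]
        exact (chainNet N s k).firesTo_append (chain_block_fires N s M hk hen) (ih _ _ hrest)
      · rw [if_neg hs]
        refine ⟨(chain_enabled_inl N t₀ M s).mpr hen, ?_⟩
        rw [chain_fire_inl N t₀ M s]
        exact ih _ _ hrest
  · intro σ' M₁ hf hc hmem
    exact chain_reverse_aux N t₀ hk σ'.length σ' le_rfl M M₁ hf hc hmem
end

section
/- With the counter-place construction N_P for a policy P, the policy P is Parikh-valid for (N, M, ℓ, γ) if and only if there is no marking M₁ reachable in N_P from the extended initial marking such that for some place p_i of N, M₁(p_i) > 0 and M₁(p_c) < ℓ(p_i). -/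
/-- The counter net `N_P`: a fresh counter place (the `none` place, initially
empty) is added; every transition labeled by an event `a ∈ Pol` additionally
deposits `γ a` tokens in the counter place, and no transition consumes from it. -/
def counterNet {P T E : Type*} [DecidableEq E] (N : PetriNet P T) (lab : T → E)
    (γ : E → ℕ) (Pol : Finset E) : PetriNet (Option P) T where
  pre := fun t q => match q with
    | some p => N.pre t p
    | none => 0
  post := fun t q => match q with
    | some p => N.post t p
    | none => if lab t ∈ Pol then γ (lab t) else 0

/-- Extend a marking of `N` by an empty fresh place. -/
def ext0 {P : Type*} (M : P → ℕ) : Option P → ℕ := fun q => q.elim 0 M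

def extc {P : Type*} (M : P → ℕ) (c : ℕ) : Option P → ℕ := fun q => q.elim c M

lemma counter_firesTo {P T E : Type*} [DecidableEq E] (N : PetriNet P T) (lab : T → E)
    (γ : E → ℕ) (Pol : Finset E) :
    ∀ (σ : List T) (M : P → ℕ) (c : ℕ) (M₁ : Option P → ℕ),
      (counterNet N lab γ Pol).firesTo (extc M c) σ M₁ ↔
      ∃ M', N.firesTo M σ M' ∧
        M₁ = extc M' (c + ∑ a ∈ Pol, γ a * (σ.map lab).count a) := by
  intro σ
  induction σ with
  | nil =>
    intro M c M₁
    simp [PetriNet.firesTo]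
  | cons t σ ih =>
    intro M c M₁
    have hen : (counterNet N lab γ Pol).enabled (extc M c) t ↔ N.enabled M t := by
      constructor
      · intro h p; exact h (some p)
      · intro h q; cases q with
        | none => exact Nat.zero_le _
        | some p => exact h p
    have hfire : (counterNet N lab γ Pol).fire (extc M c) t =
        extc (N.fire M t) (c + if lab t ∈ Pol then γ (lab t) else 0) := by
      funext q
      cases q with
      | none => simp [PetriNet.fire, counterNet, extc]
      | some p => rfl
    have hsum : ∀ l : List E, (∑ a ∈ Pol, γ a * (lab t :: l).count a) =
        (if lab t ∈ Pol then γ (lab t) else 0) + ∑ a ∈ Pol, γ a * l.count a := by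
      intro l
      have h1 : ∀ a ∈ Pol, γ a * (lab t :: l).count a
          = (if a = lab t then γ a else 0) + γ a * l.count a := by
        intro a _
        rw [List.count_cons]
        by_cases h : a = lab t
        · simp [h, Nat.mul_add, Nat.add_comm]
        · simp [h, Ne.symm h, Nat.mul_add]
      rw [Finset.sum_congr rfl h1, Finset.sum_add_distrib,
        Finset.sum_ite_eq' Pol (lab t) γ]
    simp only [PetriNet.firesTo, hen, hfire]
    constructor
    · rintro ⟨he, hrest⟩
      obtain ⟨M', hM', heq⟩ := (ih _ _ _).mp hrest
      refine ⟨M', ⟨he, hM'⟩, ?_⟩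
      rw [heq, List.map_cons, hsum, Nat.add_assoc]
    · rintro ⟨M', ⟨he, hM'⟩, heq⟩
      refine ⟨he, (ih _ _ _).mpr ⟨M', hM', ?_⟩⟩
      rw [heq, List.map_cons, hsum, Nat.add_assoc]

/-- the policy `Pol` is Parikh-valid iff no marking reachable in
the counter net from the extended initial marking has a token in some original
place `p` while the counter place holds fewer than `ℓ p` tokens. -/
theorem parikhValid_iff_no_violating_marking {P T E : Type*} [DecidableEq E]
    (N : PetriNet P T) (lab : T → E) (M : P → ℕ) (ℓ : P → ℕ) (γ : E → ℕ)
    (Pol : Finset E) :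
    ParikhValid N lab M ℓ γ Pol ↔
      ¬ ∃ (σ : List T) (M₁ : Option P → ℕ),
        (counterNet N lab γ Pol).firesTo (ext0 M) σ M₁ ∧
        ∃ p, 0 < M₁ (some p) ∧ M₁ none < ℓ p := by
  have hext : ext0 M = extc M 0 := rfl
  constructor
  · rintro hPV ⟨σ, M₁, hfires, p, hp, hc⟩
    rw [hext, counter_firesTo] at hfires
    obtain ⟨M', hM', heq⟩ := hfires
    subst heq
    exact absurd (hPV σ M' hM' p hp) (by simpa [extc] using Nat.not_le.mpr hc)
  · intro h σ M' hM' p hp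
    by_contra hlt
    exact h ⟨σ, extc M' (0 + ∑ a ∈ Pol, γ a * (σ.map lab).count a),
      (counter_firesTo N lab γ Pol σ M 0 _).mpr ⟨M', hM', rfl⟩,
      p, hp, by simpa [extc] using Nat.not_le.mp hlt⟩
end

section
/- In the coverability reduction net N' (with t_new the sole protectable event, γ(t_new) = 1, cost c(t_new) = 1, ℓ(p_new) = 2, ℓ ≡ 0 elsewhere, and budget W = 1), there exists a Parikh-valid protecting policy of cost at most W if and only if M is not coverable from M₀ in N. -/
/-- The coverability-reduction net `N'`: a fresh transition `t_new` (the `none`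
transition) consumes `Mt p` tokens from every original place `p` and deposits
one token in the fresh, initially empty place `p_new` (the `none` place). -/
def coverNet {P T : Type*} (N : PetriNet P T) (Mt : P → ℕ) :
    PetriNet (Option P) (Option T) where
  pre := fun t q => match t, q with
    | some s, some p => N.pre s p
    | some _, none => 0
    | none, some p => Mt p
    | none, none => 0
  post := fun t q => match t, q with
    | some s, some p => N.post s p
    | some _, none => 0
    | none, some _ => 0
    | none, none => 1

/-- The security requirement of the reduction: `ℓ(p_new) = 2`, `ℓ ≡ 0` elsewhere. -/
def coverReq {P : Type*} : Option P → ℕ := fun q => q.elim 2 (fun _ => 0)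

lemma coverNet_fire_some {P T : Type*} (N : PetriNet P T) (Mt M : P → ℕ) (t : T) :
    (coverNet N Mt).fire (ext0 M) (some t) = ext0 (N.fire M t) := by
  funext q; cases q <;> simp [PetriNet.fire, coverNet, ext0]

lemma coverNet_enabled_some {P T : Type*} (N : PetriNet P T) (Mt M : P → ℕ) (t : T) :
    (coverNet N Mt).enabled (ext0 M) (some t) ↔ N.enabled M t := by
  constructor
  · intro h p; exact h (some p)
  · intro h q; cases q with
    | none => simp [coverNet, ext0]
    | some p => exact h p

lemma firesTo_append {P T : Type*} (N : PetriNet P T) :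
    ∀ (σ τ : List T) (M M' M'' : P → ℕ), N.firesTo M σ M' → N.firesTo M' τ M'' →
      N.firesTo M (σ ++ τ) M''
  | [], τ, M, M', M'', h1, h2 => by cases h1; simpa using h2
  | t :: σ, τ, M, M', M'', h1, h2 =>
    ⟨h1.1, firesTo_append N σ τ _ M' M'' h1.2 h2⟩

lemma coverNet_lift {P T : Type*} (N : PetriNet P T) (Mt : P → ℕ) :
    ∀ (σ : List T) (M M' : P → ℕ), N.firesTo M σ M' →
      (coverNet N Mt).firesTo (ext0 M) (σ.map some) (ext0 M')
  | [], M, M', h => by cases h; rfl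
  | t :: σ, M, M', h => by
    refine ⟨(coverNet_enabled_some N Mt M t).2 h.1, ?_⟩
    rw [coverNet_fire_some]
    exact coverNet_lift N Mt σ _ M' h.2

lemma coverNet_extract {P T : Type*} (N : PetriNet P T) (Mt : P → ℕ) :
    ∀ (σ' : List (Option T)) (M : P → ℕ) (M' : Option P → ℕ),
      (coverNet N Mt).firesTo (ext0 M) σ' M' → 0 < M' none →
      ∃ (σ : List T) (M₁ : P → ℕ), N.firesTo M σ M₁ ∧ ∀ p, Mt p ≤ M₁ p
  | [], M, M', h, hpos => by cases h; simp [ext0] at hpos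
  | none :: σ', M, M', h, hpos =>
    ⟨[], M, rfl, fun p => by simpa [coverNet, ext0] using h.1 (some p)⟩
  | some t :: σ', M, M', h, hpos => by
    obtain ⟨σ, M₁, hf, hc⟩ := coverNet_extract N Mt σ' (N.fire M t)
      M' (by rw [← coverNet_fire_some N Mt M t]; exact h.2) hpos
    exact ⟨t :: σ, M₁, ⟨(coverNet_enabled_some N Mt M t).1 h.1, hf⟩, hc⟩

/-- in the reduction net (identity labeling, `t_new` the sole
protectable event with `γ(t_new) = 1` and cost `1`, `ℓ(p_new) = 2`, budget
`W = 1`), a Parikh-valid policy of cost at most `W` exists iff `Mt` is not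
coverable from `M₀` in `N`. -/
theorem coverNet_valid_policy_iff_not_coverable {P T : Type*} [DecidableEq T]
    (N : PetriNet P T) (M₀ Mt : P → ℕ) :
    (∃ Pol : Finset (Option T), Pol ⊆ {none} ∧ (∑ _a ∈ Pol, (1 : ℕ)) ≤ 1 ∧
        ParikhValid (coverNet N Mt) id (ext0 M₀) coverReq (fun _ => 1) Pol) ↔
    ¬ ∃ (σ : List T) (M' : P → ℕ), N.firesTo M₀ σ M' ∧ ∀ p, Mt p ≤ M' p := by
  constructor
  · rintro ⟨Pol, hsub, -, hvalid⟩ ⟨σ, M', hf, hcov⟩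
    -- fire σ then t_new
    have hen : (coverNet N Mt).enabled (ext0 M') none := by
      intro q; cases q with
      | none => simp [coverNet, ext0]
      | some p => simpa [coverNet, ext0] using hcov p
    set Mfin := (coverNet N Mt).fire (ext0 M') none with hMfin
    have hfire : (coverNet N Mt).firesTo (ext0 M₀) (σ.map some ++ [none]) Mfin :=
      firesTo_append _ _ _ _ _ _ (coverNet_lift N Mt σ M₀ M' hf) ⟨hen, rfl⟩
    have hpos : 0 < Mfin none := by simp [hMfin, PetriNet.fire, coverNet, ext0]
    have h2 := hvalid _ _ hfire none hpos
    have h3 := le_trans h2 (Finset.sum_le_sum_of_subset hsub)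
    simp only [Finset.sum_singleton, one_mul, List.map_id, List.count_append] at h3
    simp [coverReq, List.count_eq_zero] at h3
  · intro hnc
    refine ⟨∅, by simp, by simp, ?_⟩
    intro σ M' hf p hpos
    cases p with
    | some p => simp [coverReq]
    | none =>
      exact absurd (coverNet_extract N Mt σ M₀ M' hf hpos)
        (by simpa using hnc)
end

section
/- In the indicator gadget net N_P, for every firing sequence σ' of N_P there is a firing sequence σ of N with the same projection to original places and the same set of occurring labels in Σ_p ∩ P counted, and conversely every firing sequence σ of N lifts to a firing sequence σ' of N_P (firing the copy on the first occurrence of each label and originals thereafter) such that the counter place after σ' holds exactly Σ_{a∈P} γ(a)·χ_a(λ(σ)), where χ_a is the indicator function. -/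
/-- The indicator gadget net: for each event `a ∈ Sp`, fresh places
`first_a = Sum.inr (Sum.inl a)` (initially one token) and
`other_a = Sum.inr (Sum.inr (Sum.inl a))` (initially empty), plus a global
counter place `Sum.inr (Sum.inr (Sum.inr ()))` (initially empty).  Each
transition `t` with `lab t ∈ Sp` has a copy (`Sum.inr`) with the same arcs to
original places which moreover consumes `first_{lab t}`, produces
`other_{lab t}` and deposits `γ (lab t)` tokens in the counter; the original
transition (`Sum.inl`) self-loops with `other_{lab t}`. -/
def gadgetNet {P T E : Type*} [DecidableEq E] (N : PetriNet P T) (lab : T → E)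
    (γ : E → ℕ) (Sp : Finset E) :
    PetriNet (Sum P (Sum E (Sum E Unit))) (Sum T {t : T // lab t ∈ Sp}) where
  pre := fun t q => match t, q with
    | Sum.inl s, Sum.inl p => N.pre s p
    | Sum.inl _, Sum.inr (Sum.inl _) => 0
    | Sum.inl s, Sum.inr (Sum.inr (Sum.inl b)) => if lab s ∈ Sp ∧ lab s = b then 1 else 0
    | Sum.inl _, Sum.inr (Sum.inr (Sum.inr _)) => 0
    | Sum.inr t', Sum.inl p => N.pre t'.1 p
    | Sum.inr t', Sum.inr (Sum.inl b) => if lab t'.1 = b then 1 else 0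
    | Sum.inr _, Sum.inr (Sum.inr (Sum.inl _)) => 0
    | Sum.inr _, Sum.inr (Sum.inr (Sum.inr _)) => 0
  post := fun t q => match t, q with
    | Sum.inl s, Sum.inl p => N.post s p
    | Sum.inl _, Sum.inr (Sum.inl _) => 0
    | Sum.inl s, Sum.inr (Sum.inr (Sum.inl b)) => if lab s ∈ Sp ∧ lab s = b then 1 else 0
    | Sum.inl _, Sum.inr (Sum.inr (Sum.inr _)) => 0
    | Sum.inr t', Sum.inl p => N.post t'.1 p
    | Sum.inr _, Sum.inr (Sum.inl _) => 0
    | Sum.inr t', Sum.inr (Sum.inr (Sum.inl b)) => if lab t'.1 = b then 1 else 0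
    | Sum.inr t', Sum.inr (Sum.inr (Sum.inr _)) => γ (lab t'.1)

/-- The extended initial marking of the gadget net. -/
def gadgetExt {P E : Type*} (M : P → ℕ) : Sum P (Sum E (Sum E Unit)) → ℕ :=
  fun q => match q with
    | Sum.inl p => M p
    | Sum.inr (Sum.inl _) => 1
    | Sum.inr (Sum.inr (Sum.inl _)) => 0
    | Sum.inr (Sum.inr (Sum.inr _)) => 0

/-- The index of the global counter place. -/
def counterIdx {P E : Type*} : Sum P (Sum E (Sum E Unit)) := Sum.inr (Sum.inr (Sum.inr ()))

/-- Whether a gadget transition is a copy transition carrying the label `a`. -/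
def isCopyOf {T E : Type*} [DecidableEq E] {Sp : Finset E} (lab : T → E) (a : E) :
    Sum T {t : T // lab t ∈ Sp} → Bool :=
  fun x => match x with
    | Sum.inl _ => false
    | Sum.inr t' => decide (lab t'.1 = a)

/-- The projection of gadget transitions back to original transitions. -/
def gadgetProj {T E : Type*} [DecidableEq E] {Sp : Finset E} (lab : T → E) :
    Sum T {t : T // lab t ∈ Sp} → T :=
  fun x => match x with
    | Sum.inl s => s
    | Sum.inr t' => t'.1

section AuxGadget

variable {P T E : Type*} [DecidableEq E] (N : PetriNet P T) (lab : T → E)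
    (γ : E → ℕ) (Pol : Finset E)

/-- Auxiliary: marking of the gadget net when the set of already-seen
policy labels is `S`. -/
def liftMark (M : P → ℕ) (S : Finset E) : Sum P (Sum E (Sum E Unit)) → ℕ :=
  fun q => match q with
    | Sum.inl p => M p
    | Sum.inr (Sum.inl a) => if a ∈ S then 0 else 1
    | Sum.inr (Sum.inr (Sum.inl a)) => if a ∈ S then 1 else 0
    | Sum.inr (Sum.inr (Sum.inr _)) => ∑ a ∈ Pol, γ a * (if a ∈ S then 1 else 0)

lemma liftMark_empty (M : P → ℕ) : liftMark γ Pol M (∅ : Finset E) = gadgetExt M := by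
  funext q
  rcases q with p | a | a | u <;> simp [liftMark, gadgetExt]

lemma gadget_proj_dir :
    ∀ (σ' : List (Sum T {t : T // lab t ∈ Pol})) (M₀ M₁ : Sum P (Sum E (Sum E Unit)) → ℕ),
      (gadgetNet N lab γ Pol).firesTo M₀ σ' M₁ →
      N.firesTo (fun p => M₀ (Sum.inl p)) (σ'.map (gadgetProj lab))
        (fun p => M₁ (Sum.inl p)) := by
  intro σ'
  induction σ' with
  | nil => intro M₀ M₁ h; subst h; rfl
  | cons t σ' ih =>
    intro M₀ M₁ h
    obtain ⟨hen, hrest⟩ := h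
    refine ⟨?_, ?_⟩
    · intro p
      have := hen (Sum.inl p)
      cases t <;> simpa [gadgetNet, gadgetProj] using this
    · have hcomm : N.fire (fun p => M₀ (Sum.inl p)) (gadgetProj lab t)
          = fun p => ((gadgetNet N lab γ Pol).fire M₀ t) (Sum.inl p) := by
        funext p; cases t <;> rfl
      rw [hcomm]
      exact ih _ _ hrest

lemma gadget_copy_step (M : P → ℕ) (S : Finset E) (t : T)
    (h1 : lab t ∈ Pol) (h2 : lab t ∉ S) (ht : N.enabled M t) :
    (gadgetNet N lab γ Pol).enabled (liftMark γ Pol M S) (Sum.inr ⟨t, h1⟩) ∧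
    (gadgetNet N lab γ Pol).fire (liftMark γ Pol M S) (Sum.inr ⟨t, h1⟩)
      = liftMark γ Pol (N.fire M t) (insert (lab t) S) := by
  constructor
  · intro q
    rcases q with p | a | a | u
    · exact ht p
    · simp only [gadgetNet, liftMark]
      by_cases hb : lab t = a
      · subst hb; simp [h2]
      · simp [hb]
    · simp [gadgetNet, liftMark]
    · simp [gadgetNet, liftMark]
  · funext q
    rcases q with p | a | a | u
    · rfl
    · simp only [PetriNet.fire, gadgetNet, liftMark]
      by_cases hb : lab t = a
      · subst hb; simp [h2]
      · simp [hb, Ne.symm hb, Finset.mem_insert]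
    · simp only [PetriNet.fire, gadgetNet, liftMark]
      by_cases hb : lab t = a
      · subst hb; simp [h2]
      · simp [hb, Ne.symm hb, Finset.mem_insert]
    · simp only [PetriNet.fire, gadgetNet, liftMark, Nat.sub_zero]
      have hcong : ∀ a ∈ Pol, γ a * (if a ∈ insert (lab t) S then 1 else 0)
          = γ a * (if a ∈ S then 1 else 0) + (if a = lab t then γ (lab t) else 0) := by
        intro a _
        by_cases ha : a = lab t
        · subst ha; simp [h2]
        · simp [Finset.mem_insert, ha]
      rw [Finset.sum_congr rfl hcong, Finset.sum_add_distrib,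
        Finset.sum_ite_eq' Pol (lab t) (fun _ => γ (lab t))]
      simp [h1]

lemma gadget_orig_step (M : P → ℕ) (S : Finset E) (t : T)
    (h : lab t ∈ Pol → lab t ∈ S) (ht : N.enabled M t) :
    (gadgetNet N lab γ Pol).enabled (liftMark γ Pol M S) (Sum.inl t) ∧
    (gadgetNet N lab γ Pol).fire (liftMark γ Pol M S) (Sum.inl t)
      = liftMark γ Pol (N.fire M t) S := by
  constructor
  · intro q
    rcases q with p | a | a | u
    · exact ht p
    · simp [gadgetNet, liftMark]
    · simp only [gadgetNet, liftMark]
      by_cases hc : lab t ∈ Pol ∧ lab t = a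
      · obtain ⟨hp, hb⟩ := hc; subst hb; simp [h hp, hp]
      · simp [hc]
    · simp [gadgetNet, liftMark]
  · funext q
    rcases q with p | a | a | u
    · rfl
    · simp [PetriNet.fire, gadgetNet, liftMark]
    · simp only [PetriNet.fire, gadgetNet, liftMark]
      by_cases hc : lab t ∈ Pol ∧ lab t = a
      · obtain ⟨hp, hb⟩ := hc; subst hb; simp [h hp, hp]
      · simp [hc]
    · simp [PetriNet.fire, gadgetNet, liftMark]

lemma gadget_lift_dir :
    ∀ (σ : List T) (M M' : P → ℕ), N.firesTo M σ M' → ∀ S : Finset E,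
      ∃ σ' : List (Sum T {t : T // lab t ∈ Pol}),
        (gadgetNet N lab γ Pol).firesTo (liftMark γ Pol M S) σ'
          (liftMark γ Pol M' (S ∪ ((σ.map lab).toFinset ∩ Pol))) ∧
        σ'.map (gadgetProj lab) = σ := by
  intro σ
  induction σ with
  | nil =>
    intro M M' h S
    exact ⟨[], by subst h; simp [PetriNet.firesTo], rfl⟩
  | cons t σ ih =>
    intro M M' h S
    obtain ⟨hen, hrest⟩ := h
    by_cases hc : lab t ∈ Pol ∧ lab t ∉ S
    · obtain ⟨hstep1, hstep2⟩ := gadget_copy_step N lab γ Pol M S t hc.1 hc.2 hen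
      obtain ⟨σ'', hfires, hmap⟩ := ih _ _ hrest (insert (lab t) S)
      refine ⟨Sum.inr ⟨t, hc.1⟩ :: σ'', ⟨hstep1, ?_⟩, by simp [gadgetProj, hmap]⟩
      rw [hstep2]
      have hset : insert (lab t) S ∪ ((σ.map lab).toFinset ∩ Pol)
          = S ∪ (((t :: σ).map lab).toFinset ∩ Pol) := by
        ext a
        simp only [Finset.mem_union, Finset.mem_insert, Finset.mem_inter,
          List.mem_toFinset, List.map_cons, List.mem_cons]
        constructor
        · rintro ((rfl | hS) | ⟨hl, hp⟩)
          · exact Or.inr ⟨Or.inl rfl, hc.1⟩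
          · exact Or.inl hS
          · exact Or.inr ⟨Or.inr hl, hp⟩
        · rintro (hS | ⟨rfl | hl, hp⟩)
          · exact Or.inl (Or.inr hS)
          · exact Or.inl (Or.inl rfl)
          · exact Or.inr ⟨hl, hp⟩
      rwa [hset] at hfires
    · have h' : lab t ∈ Pol → lab t ∈ S := by tauto
      obtain ⟨hstep1, hstep2⟩ := gadget_orig_step N lab γ Pol M S t h' hen
      obtain ⟨σ'', hfires, hmap⟩ := ih _ _ hrest S
      refine ⟨Sum.inl t :: σ'', ⟨hstep1, ?_⟩, by simp [gadgetProj, hmap]⟩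
      rw [hstep2]
      have hset : S ∪ ((σ.map lab).toFinset ∩ Pol)
          = S ∪ (((t :: σ).map lab).toFinset ∩ Pol) := by
        ext a
        simp only [Finset.mem_union, Finset.mem_inter, List.mem_toFinset,
          List.map_cons, List.mem_cons]
        constructor
        · rintro (hS | ⟨hl, hp⟩)
          · exact Or.inl hS
          · exact Or.inr ⟨Or.inr hl, hp⟩
        · rintro (hS | ⟨rfl | hl, hp⟩)
          · exact Or.inl hS
          · exact Or.inl (h' hp)
          · exact Or.inr ⟨hl, hp⟩
      rwa [hset] at hfires

end AuxGadget

/-- every firing sequence of the gadget net (built for the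
policy `Pol`) projects to a firing sequence of `N` with the same marking on
original places; conversely every firing sequence of `N` lifts to a firing
sequence of the gadget net (firing the copy on the first occurrence of each
label and originals thereafter) whose counter place holds exactly the
indicator-clearance `∑_{a ∈ Pol} γ a · χ_a(λ(σ))`. -/
theorem gadgetNet_correspondence {P T E : Type*} [DecidableEq E]
    (N : PetriNet P T) (lab : T → E) (γ : E → ℕ) (Pol : Finset E) (M : P → ℕ) :
    (∀ (σ' : List (Sum T {t : T // lab t ∈ Pol}))
        (M₁ : Sum P (Sum E (Sum E Unit)) → ℕ),
      (gadgetNet N lab γ Pol).firesTo (gadgetExt M) σ' M₁ →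
      ∃ M' : P → ℕ, N.firesTo M (σ'.map (gadgetProj lab)) M' ∧
        ∀ p, M₁ (Sum.inl p) = M' p) ∧
    (∀ (σ : List T) (M' : P → ℕ), N.firesTo M σ M' →
      ∃ (σ' : List (Sum T {t : T // lab t ∈ Pol}))
        (M₁ : Sum P (Sum E (Sum E Unit)) → ℕ),
        (gadgetNet N lab γ Pol).firesTo (gadgetExt M) σ' M₁ ∧
        σ'.map (gadgetProj lab) = σ ∧
        (∀ p, M₁ (Sum.inl p) = M' p) ∧
        M₁ counterIdx = ∑ a ∈ Pol, γ a * (if a ∈ σ.map lab then 1 else 0)) := by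
  constructor
  · intro σ' M₁ h
    refine ⟨fun p => M₁ (Sum.inl p), ?_, fun p => rfl⟩
    have := gadget_proj_dir N lab γ Pol σ' (gadgetExt M) M₁ h
    exact this
  · intro σ M' h
    obtain ⟨σ', hfires, hmap⟩ := gadget_lift_dir N lab γ Pol σ M M' h ∅
    rw [liftMark_empty] at hfires
    refine ⟨σ', _, hfires, hmap, fun p => rfl, ?_⟩
    show (∑ a ∈ Pol, γ a * (if a ∈ (∅ ∪ ((σ.map lab).toFinset ∩ Pol)) then 1 else 0)) = _
    refine Finset.sum_congr rfl fun a ha => ?_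
    simp [ha]
end

section
/- A policy P is indicator-valid for (N, M, ℓ, γ) if and only if no marking M₁ reachable in the indicator gadget net N_P satisfies, for some original place p_i, M₁(p_i) > 0 and M₁(counter) < ℓ(p_i). -/
namespace Gadget13

variable {P T E : Type*} [DecidableEq E]

/-- Projection of a gadget transition to the original transition. -/
def proj {lab : T → E} {Sp : Finset E} : Sum T {t : T // lab t ∈ Sp} → T :=
  Sum.elim id Subtype.val

/-- The invariant relating a gadget marking `M₁` to an original marking `M'`
and the list `L` of labels fired so far. -/
def Good (γ : E → ℕ) (Pol : Finset E)
    (M' : P → ℕ) (L : List E) (M₁ : Sum P (Sum E (Sum E Unit)) → ℕ) : Prop :=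
  (∀ p, M₁ (Sum.inl p) = M' p) ∧
  (∀ a, M₁ (Sum.inr (Sum.inl a)) = if a ∈ Pol ∧ a ∈ L then 0 else 1) ∧
  (∀ a, M₁ (Sum.inr (Sum.inr (Sum.inl a))) = if a ∈ Pol ∧ a ∈ L then 1 else 0) ∧
  M₁ (Sum.inr (Sum.inr (Sum.inr ()))) = ∑ a ∈ Pol, γ a * (if a ∈ L then 1 else 0)

lemma stepOrig (N : PetriNet P T) (lab : T → E) (γ : E → ℕ) (Pol : Finset E)
    {M₀ : P → ℕ} {L : List E} {M₁ : Sum P (Sum E (Sum E Unit)) → ℕ} (s : T)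
    (hg : Good γ Pol M₀ L M₁) (he : N.enabled M₀ s)
    (hmem : lab s ∈ Pol → lab s ∈ L) :
    (gadgetNet N lab γ Pol).enabled M₁ (Sum.inl s) ∧
      Good γ Pol (N.fire M₀ s) (L ++ [lab s])
        ((gadgetNet N lab γ Pol).fire M₁ (Sum.inl s)) := by
  obtain ⟨h1, h2, h3, h4⟩ := hg
  have hiff : ∀ a, (a ∈ Pol ∧ a ∈ L ++ [lab s]) ↔ (a ∈ Pol ∧ a ∈ L) := by
    intro a
    simp only [List.mem_append, List.mem_singleton]
    constructor
    · rintro ⟨ha, hb | rfl⟩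
      · exact ⟨ha, hb⟩
      · exact ⟨ha, hmem ha⟩
    · rintro ⟨ha, hb⟩; exact ⟨ha, Or.inl hb⟩
  have hen : (gadgetNet N lab γ Pol).enabled M₁ (Sum.inl s) := by
    intro q
    rcases q with p | a | a | u
    · simpa [gadgetNet, h1] using he p
    · simp [gadgetNet]
    · rw [h3]
      show (if lab s ∈ Pol ∧ lab s = a then 1 else 0) ≤ _
      split
      · rename_i h
        obtain ⟨hp, heq⟩ := h
        subst heq
        simp [hp, hmem hp]
      · simp
    · simp [gadgetNet]
  refine ⟨hen, ?_, ?_, ?_, ?_⟩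
  · intro p
    show M₁ (Sum.inl p) - N.pre s p + N.post s p = _
    rw [h1]; rfl
  · intro a
    show M₁ (Sum.inr (Sum.inl a)) - 0 + 0 = _
    rw [h2]
    simp only [Nat.sub_zero, Nat.add_zero]
    by_cases h : a ∈ Pol ∧ a ∈ L
    · rw [if_pos h, if_pos ((hiff a).mpr h)]
    · rw [if_neg h, if_neg (fun hc => h ((hiff a).mp hc))]
  · intro a
    show M₁ (Sum.inr (Sum.inr (Sum.inl a))) -
        (if lab s ∈ Pol ∧ lab s = a then 1 else 0) +
        (if lab s ∈ Pol ∧ lab s = a then 1 else 0) = _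
    rw [h3]
    by_cases hc : lab s ∈ Pol ∧ lab s = a
    · obtain ⟨hp, heq⟩ := hc
      subst heq
      have hL : lab s ∈ L := hmem hp
      simp [hp, hL]
    · rw [if_neg hc]
      simp only [Nat.sub_zero, Nat.add_zero]
      by_cases h : a ∈ Pol ∧ a ∈ L
      · rw [if_pos h, if_pos ((hiff a).mpr h)]
      · rw [if_neg h, if_neg (fun hc' => h ((hiff a).mp hc'))]
  · show M₁ (Sum.inr (Sum.inr (Sum.inr ()))) - 0 + 0 = _
    rw [h4]
    simp only [Nat.sub_zero, Nat.add_zero]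
    refine Finset.sum_congr rfl fun a ha => ?_
    have : a ∈ L ++ [lab s] ↔ a ∈ L := by
      constructor
      · intro h; exact ((hiff a).mp ⟨ha, h⟩).2
      · intro h; exact ((hiff a).mpr ⟨ha, h⟩).2
    by_cases h : a ∈ L
    · rw [if_pos h, if_pos (this.mpr h)]
    · rw [if_neg h, if_neg (fun hc => h (this.mp hc))]

lemma stepCopy (N : PetriNet P T) (lab : T → E) (γ : E → ℕ) (Pol : Finset E)
    {M₀ : P → ℕ} {L : List E} {M₁ : Sum P (Sum E (Sum E Unit)) → ℕ} (t : T)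
    (ht : lab t ∈ Pol)
    (hg : Good γ Pol M₀ L M₁) (he : N.enabled M₀ t)
    (hnm : lab t ∉ L) :
    (gadgetNet N lab γ Pol).enabled M₁ (Sum.inr ⟨t, ht⟩) ∧
      Good γ Pol (N.fire M₀ t) (L ++ [lab t])
        ((gadgetNet N lab γ Pol).fire M₁ (Sum.inr ⟨t, ht⟩)) := by
  obtain ⟨h1, h2, h3, h4⟩ := hg
  have hen : (gadgetNet N lab γ Pol).enabled M₁ (Sum.inr ⟨t, ht⟩) := by
    intro q
    rcases q with p | a | a | u
    · simpa [gadgetNet, h1] using he p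
    · rw [h2]
      show (if lab t = a then 1 else 0) ≤ _
      split
      · rename_i heq
        subst heq
        simp [hnm]
      · simp
    · simp [gadgetNet]
    · simp [gadgetNet]
  have hmemnew : ∀ a, (a ∈ L ++ [lab t]) ↔ (a ∈ L ∨ a = lab t) := by
    intro a; simp [List.mem_append]
  refine ⟨hen, ?_, ?_, ?_, ?_⟩
  · intro p
    show M₁ (Sum.inl p) - N.pre t p + N.post t p = _
    rw [h1]; rfl
  · intro a
    show M₁ (Sum.inr (Sum.inl a)) - (if lab t = a then 1 else 0) + 0 = _
    rw [h2]
    by_cases heq : lab t = a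
    · subst heq
      rw [if_pos rfl, if_neg (by simp [hnm]), if_pos ⟨ht, by simp⟩]
    · rw [if_neg heq]
      simp only [Nat.sub_zero, Nat.add_zero]
      have : (a ∈ Pol ∧ a ∈ L ++ [lab t]) ↔ (a ∈ Pol ∧ a ∈ L) := by
        rw [hmemnew]
        constructor
        · rintro ⟨ha, hb | rfl⟩
          · exact ⟨ha, hb⟩
          · exact absurd rfl heq
        · rintro ⟨ha, hb⟩; exact ⟨ha, Or.inl hb⟩
      by_cases h : a ∈ Pol ∧ a ∈ L
      · rw [if_pos h, if_pos (this.mpr h)]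
      · rw [if_neg h, if_neg (fun hc => h (this.mp hc))]
  · intro a
    show M₁ (Sum.inr (Sum.inr (Sum.inl a))) - 0 + (if lab t = a then 1 else 0) = _
    rw [h3]
    by_cases heq : lab t = a
    · subst heq
      rw [if_pos rfl, if_neg (by simp [hnm]), if_pos ⟨ht, by simp⟩]
    · rw [if_neg heq]
      simp only [Nat.sub_zero, Nat.add_zero]
      have : (a ∈ Pol ∧ a ∈ L ++ [lab t]) ↔ (a ∈ Pol ∧ a ∈ L) := by
        rw [hmemnew]
        constructor
        · rintro ⟨ha, hb | rfl⟩
          · exact ⟨ha, hb⟩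
          · exact absurd rfl heq
        · rintro ⟨ha, hb⟩; exact ⟨ha, Or.inl hb⟩
      by_cases h : a ∈ Pol ∧ a ∈ L
      · rw [if_pos h, if_pos (this.mpr h)]
      · rw [if_neg h, if_neg (fun hc => h (this.mp hc))]
  · show M₁ (Sum.inr (Sum.inr (Sum.inr ()))) - 0 + γ (lab t) = _
    rw [h4]
    simp only [Nat.sub_zero]
    have hsplit : ∀ a ∈ Pol, γ a * (if a ∈ L ++ [lab t] then 1 else 0) =
        γ a * (if a ∈ L then 1 else 0) + (if a = lab t then γ a else 0) := by
      intro a _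
      by_cases heq : a = lab t
      · subst heq
        rw [if_pos (by simp), if_neg hnm, if_pos rfl]
        ring
      · rw [if_neg heq]
        have : (a ∈ L ++ [lab t]) ↔ a ∈ L := by
          rw [hmemnew]
          exact ⟨fun h => h.resolve_right heq, Or.inl⟩
        by_cases h : a ∈ L
        · rw [if_pos h, if_pos (this.mpr h)]; ring
        · rw [if_neg h, if_neg (fun hc => h (this.mp hc))]; ring
    rw [Finset.sum_congr rfl hsplit, Finset.sum_add_distrib,
      Finset.sum_ite_eq' Pol (lab t) γ, if_pos ht]

lemma extractOrig (N : PetriNet P T) (lab : T → E) (γ : E → ℕ) (Pol : Finset E)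
    {M₀ : P → ℕ} {L : List E} {M₁ : Sum P (Sum E (Sum E Unit)) → ℕ} (s : T)
    (hg : Good γ Pol M₀ L M₁)
    (hen : (gadgetNet N lab γ Pol).enabled M₁ (Sum.inl s)) :
    N.enabled M₀ s ∧ (lab s ∈ Pol → lab s ∈ L) := by
  obtain ⟨h1, h2, h3, h4⟩ := hg
  constructor
  · intro p
    have := hen (Sum.inl p)
    rwa [h1] at this
  · intro hp
    have := hen (Sum.inr (Sum.inr (Sum.inl (lab s))))
    rw [h3] at this
    have hpre : (gadgetNet N lab γ Pol).pre (Sum.inl s)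
        (Sum.inr (Sum.inr (Sum.inl (lab s)))) = 1 := by
      show (if lab s ∈ Pol ∧ lab s = lab s then 1 else 0) = 1
      rw [if_pos ⟨hp, rfl⟩]
    rw [hpre] at this
    by_contra hL
    rw [if_neg (fun hc => hL hc.2)] at this
    omega

lemma extractCopy (N : PetriNet P T) (lab : T → E) (γ : E → ℕ) (Pol : Finset E)
    {M₀ : P → ℕ} {L : List E} {M₁ : Sum P (Sum E (Sum E Unit)) → ℕ} (t : T)
    (ht : lab t ∈ Pol)
    (hg : Good γ Pol M₀ L M₁)
    (hen : (gadgetNet N lab γ Pol).enabled M₁ (Sum.inr ⟨t, ht⟩)) :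
    N.enabled M₀ t ∧ lab t ∉ L := by
  obtain ⟨h1, h2, h3, h4⟩ := hg
  constructor
  · intro p
    have := hen (Sum.inl p)
    rwa [h1] at this
  · intro hL
    have := hen (Sum.inr (Sum.inl (lab t)))
    rw [h2, if_pos ⟨ht, hL⟩] at this
    have hpre : (gadgetNet N lab γ Pol).pre (Sum.inr ⟨t, ht⟩)
        (Sum.inr (Sum.inl (lab t))) = 1 := by
      show (if lab t = lab t then 1 else 0) = 1
      rw [if_pos rfl]
    rw [hpre] at this
    omega

lemma fwd (N : PetriNet P T) (lab : T → E) (γ : E → ℕ) (Pol : Finset E) :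
    ∀ (σ' : List (Sum T {t : T // lab t ∈ Pol}))
      (M₁ M₂ : Sum P (Sum E (Sum E Unit)) → ℕ) (M₀ : P → ℕ) (L : List E),
    Good γ Pol M₀ L M₁ →
    (gadgetNet N lab γ Pol).firesTo M₁ σ' M₂ →
    ∃ M'', N.firesTo M₀ (σ'.map proj) M'' ∧
      Good γ Pol M'' (L ++ σ'.map (fun x => lab (proj x))) M₂ := by
  intro σ'
  induction σ' with
  | nil =>
    intro M₁ M₂ M₀ L hg hf
    have h : M₂ = M₁ := hf
    subst h
    exact ⟨M₀, rfl, by simpa using hg⟩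
  | cons t' rest ih =>
    intro M₁ M₂ M₀ L hg hf
    obtain ⟨he, hrest⟩ := hf
    rcases t' with s | ⟨t, ht⟩
    · obtain ⟨he', hmem⟩ := extractOrig N lab γ Pol s hg he
      obtain ⟨_, hg'⟩ := stepOrig N lab γ Pol s hg he' hmem
      obtain ⟨M'', hf'', hg''⟩ := ih _ M₂ (N.fire M₀ s) (L ++ [lab s]) hg' hrest
      refine ⟨M'', ⟨he', hf''⟩, ?_⟩
      simpa [List.append_assoc, proj] using hg''
    · obtain ⟨he', hnm⟩ := extractCopy N lab γ Pol t ht hg he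
      obtain ⟨_, hg'⟩ := stepCopy N lab γ Pol t ht hg he' hnm
      obtain ⟨M'', hf'', hg''⟩ := ih _ M₂ (N.fire M₀ t) (L ++ [lab t]) hg' hrest
      refine ⟨M'', ⟨he', hf''⟩, ?_⟩
      simpa [List.append_assoc, proj] using hg''

lemma lift (N : PetriNet P T) (lab : T → E) (γ : E → ℕ) (Pol : Finset E) :
    ∀ (σ : List T) (M₀ M' : P → ℕ) (L : List E)
      (M₁ : Sum P (Sum E (Sum E Unit)) → ℕ),
    Good γ Pol M₀ L M₁ →
    N.firesTo M₀ σ M' →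
    ∃ (σ' : List (Sum T {t : T // lab t ∈ Pol}))
      (M₂ : Sum P (Sum E (Sum E Unit)) → ℕ),
      (gadgetNet N lab γ Pol).firesTo M₁ σ' M₂ ∧
      Good γ Pol M' (L ++ σ.map lab) M₂ := by
  intro σ
  induction σ with
  | nil =>
    intro M₀ M' L M₁ hg hf
    have h : M' = M₀ := hf
    subst h
    exact ⟨[], M₁, rfl, by simpa using hg⟩
  | cons t rest ih =>
    intro M₀ M' L M₁ hg hf
    obtain ⟨he, hrest⟩ := hf
    by_cases hc : lab t ∈ Pol ∧ lab t ∉ L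
    · obtain ⟨hen, hg'⟩ := stepCopy N lab γ Pol t hc.1 hg he hc.2
      obtain ⟨σ'', M₂, hf'', hg''⟩ := ih (N.fire M₀ t) M' (L ++ [lab t]) _ hg' hrest
      refine ⟨Sum.inr ⟨t, hc.1⟩ :: σ'', M₂, ⟨hen, hf''⟩, ?_⟩
      simpa [List.append_assoc] using hg''
    · have hmem : lab t ∈ Pol → lab t ∈ L := by
        intro hp
        by_contra hL
        exact hc ⟨hp, hL⟩
      obtain ⟨hen, hg'⟩ := stepOrig N lab γ Pol t hg he hmem
      obtain ⟨σ'', M₂, hf'', hg''⟩ := ih (N.fire M₀ t) M' (L ++ [lab t]) _ hg' hrest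
      refine ⟨Sum.inl t :: σ'', M₂, ⟨hen, hf''⟩, ?_⟩
      simpa [List.append_assoc] using hg''

lemma good_init (γ : E → ℕ) (Pol : Finset E) (M : P → ℕ) :
    Good γ Pol M ([] : List E) (gadgetExt M) := by
  refine ⟨fun p => rfl, fun a => by simp [gadgetExt], fun a => by simp [gadgetExt], ?_⟩
  simp [gadgetExt]

end Gadget13

/-- the policy `Pol` is indicator-valid iff no marking reachable
in the gadget net built for `Pol` has a token in some original place `p` while
the counter holds fewer than `ℓ p` tokens. -/
theorem indicatorValid_iff_no_violating_marking {P T E : Type*} [DecidableEq E]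
    (N : PetriNet P T) (lab : T → E) (M : P → ℕ) (ℓ : P → ℕ) (γ : E → ℕ)
    (Pol : Finset E) :
    IndicatorValid N lab M ℓ γ Pol ↔
      ¬ ∃ (σ' : List (Sum T {t : T // lab t ∈ Pol}))
          (M₁ : Sum P (Sum E (Sum E Unit)) → ℕ),
        (gadgetNet N lab γ Pol).firesTo (gadgetExt M) σ' M₁ ∧
        ∃ p, 0 < M₁ (Sum.inl p) ∧ M₁ counterIdx < ℓ p := by
  constructor
  · rintro hIV ⟨σ', M₁, hf, p, hp, hlt⟩
    obtain ⟨M'', hf'', hg''⟩ := Gadget13.fwd N lab γ Pol σ' (gadgetExt M) M₁ M []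
      (Gadget13.good_init γ Pol M) hf
    obtain ⟨h1, h2, h3, h4⟩ := hg''
    have hp' : 0 < M'' p := by rw [← h1]; exact hp
    have hIVp := hIV (σ'.map Gadget13.proj) M'' hf'' p hp'
    have hcount : M₁ counterIdx =
        ∑ a ∈ Pol, γ a * (if a ∈ (σ'.map Gadget13.proj).map lab then 1 else 0) := by
      show M₁ (Sum.inr (Sum.inr (Sum.inr ()))) = _
      rw [h4]
      simp only [List.nil_append, List.map_map]
      rfl
    rw [hcount] at hlt
    omega
  · intro hv σ M' hf p hp
    obtain ⟨σ', M₂, hf', hg'⟩ := Gadget13.lift N lab γ Pol σ M M' [] (gadgetExt M)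
      (Gadget13.good_init γ Pol M) hf
    obtain ⟨h1, h2, h3, h4⟩ := hg'
    by_contra hlt
    push_neg at hlt
    refine hv ⟨σ', M₂, hf', p, ?_, ?_⟩
    · rw [h1]; exact hp
    · show M₂ (Sum.inr (Sum.inr (Sum.inr ()))) < ℓ p
      rw [h4]
      simpa using hlt
end

section
/- For every instance of Indicator-SPP in which some event a has γ(a) = k > 1, the transformed instance obtained by replacing each a-labeled transition by a chain of k transitions with k fresh labels a_1,…,a_k, setting γ(a_i) = 1 for all i, c(a_1) = c(a), and c(a_2) = … = c(a_k) = 0, satisfies: a policy containing a is indicator-valid in the original instance with contribution γ(a)·χ_a(w) = k·χ_a(w) if and only if the policy containing all a_1,…,a_k is indicator-valid in the transformed instance, where each a_i contributes χ_{a_i}(w')·1, and the atomicity of the chain guarantees χ_{a_1}(w') = … = χ_{a_k}(w') = χ_a(w) for corresponding runs; moreover, the costs of the two policies are equal. -/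
/-- The chain-replacement net for the indicator setting: every transition `s`
with `lab s = a` is replaced by a chain of `k` fresh transitions
`Sum.inr (s, i)` connected by fresh chain places `Sum.inr (Sum.inl (s, j))`;
a global control place `Sum.inr (Sum.inr ())` is consumed by the first chain
transition, produced by the last, and self-looped with every remaining
transition, making each chain fire atomically. -/
def indChainNet {P T E : Type*} [DecidableEq T] [DecidableEq E]
    (N : PetriNet P T) (lab : T → E) (a : E) (k : ℕ) :
    PetriNet (Sum P (Sum ({s : T // lab s = a} × Fin (k - 1)) Unit))
             (Sum {s : T // lab s ≠ a} ({s : T // lab s = a} × Fin k)) where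
  pre := fun t q => match t, q with
    | Sum.inl s, Sum.inl p => N.pre s.1 p
    | Sum.inl _, Sum.inr (Sum.inl _) => 0
    | Sum.inl _, Sum.inr (Sum.inr _) => 1
    | Sum.inr (s, i), Sum.inl p => if i.val = 0 then N.pre s.1 p else 0
    | Sum.inr (s, i), Sum.inr (Sum.inl (s', j)) =>
        if s' = s ∧ i.val = j.val + 1 then 1 else 0
    | Sum.inr (_, i), Sum.inr (Sum.inr _) => if i.val = 0 then 1 else 0
  post := fun t q => match t, q with
    | Sum.inl s, Sum.inl p => N.post s.1 p
    | Sum.inl _, Sum.inr (Sum.inl _) => 0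
    | Sum.inl _, Sum.inr (Sum.inr _) => 1
    | Sum.inr (s, i), Sum.inl p => if i.val = k - 1 then N.post s.1 p else 0
    | Sum.inr (s, i), Sum.inr (Sum.inl (s', j)) =>
        if s' = s ∧ i.val = j.val then 1 else 0
    | Sum.inr (_, i), Sum.inr (Sum.inr _) => if i.val = k - 1 then 1 else 0

/-- Extended initial marking: one token on the control place, chain places empty. -/
def indChainExt {P T E : Type*} {lab : T → E} {a : E} {k : ℕ} (M : P → ℕ) :
    Sum P (Sum ({s : T // lab s = a} × Fin (k - 1)) Unit) → ℕ :=
  fun q => match q with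
    | Sum.inl p => M p
    | Sum.inr (Sum.inl _) => 0
    | Sum.inr (Sum.inr _) => 1

/-- Labeling of the transformed net: the `i`-th chain transitions carry the
fresh label `a_i = Sum.inr i`, the others keep their (embedded) labels. -/
def indChainLab {T E : Type*} (lab : T → E) (a : E) (k : ℕ) :
    Sum {s : T // lab s ≠ a} ({s : T // lab s = a} × Fin k) → Sum E (Fin k) :=
  fun t => match t with
    | Sum.inl s => Sum.inl (lab s.1)
    | Sum.inr (_, i) => Sum.inr i


namespace IndChainAux

lemma firesTo_append {P T : Type*} (N : PetriNet P T) :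
    ∀ (σ₁ : List T) {M M₁ M₂ : P → ℕ} {σ₂ : List T},
      N.firesTo M σ₁ M₁ → N.firesTo M₁ σ₂ M₂ → N.firesTo M (σ₁ ++ σ₂) M₂ := by
  intro σ₁
  induction σ₁ with
  | nil =>
    intro M M₁ M₂ σ₂ h1 h2
    have h1' : M₁ = M := h1
    subst h1'; exact h2
  | cons t σ ih =>
    intro M M₁ M₂ σ₂ h1 h2
    exact ⟨h1.1, ih h1.2 h2⟩

lemma firesTo_congr {P T : Type*} (N : PetriNet P T) {M M' W : P → ℕ} {σ : List T}
    (h : N.firesTo M σ M') (hW : M = W) : N.firesTo W σ M' := hW ▸ h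

section Main

variable {P T E : Type*} [DecidableEq T] [DecidableEq E]
variable (N : PetriNet P T) (lab : T → E) (a : E) (k : ℕ)

/-- Reachable markings of the transformed net: `none` = all chains idle,
`some (s, j)` = the chain of `s` is in progress, the token sits on chain place `(s,j)`. -/
def markSt (M : P → ℕ) :
    Option ({s : T // lab s = a} × Fin (k - 1)) →
      Sum P (Sum ({s : T // lab s = a} × Fin (k - 1)) Unit) → ℕ
  | none => indChainExt M
  | some x => fun q => match q with
    | Sum.inl p => M p
    | Sum.inr (Sum.inl y) => if y = x then 1 else 0
    | Sum.inr (Sum.inr _) => 0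

def stLo : Option ({s : T // lab s = a} × Fin (k - 1)) → ℕ
  | none => 0
  | some (_, j) => j.val + 1

def stPre (M : P → ℕ) : Option ({s : T // lab s = a} × Fin (k - 1)) → P → ℕ
  | none => M
  | some (s, _) => fun p => M p + N.pre s.1 p

lemma proj (hk : 1 < k) :
    ∀ (σ' : List (Sum {s : T // lab s ≠ a} ({s : T // lab s = a} × Fin k)))
      (st : Option ({s : T // lab s = a} × Fin (k - 1))) (M : P → ℕ)
      (M'' : Sum P (Sum ({s : T // lab s = a} × Fin (k - 1)) Unit) → ℕ),
      (indChainNet N lab a k).firesTo (markSt lab a k M st) σ' M'' →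
      ∃ σ Mf, N.firesTo (stPre N lab a k M st) σ Mf ∧
        (∀ p, M'' (Sum.inl p) ≤ Mf p) ∧
        (∀ b, b ≠ a → b ∈ σ.map lab → Sum.inl b ∈ σ'.map (indChainLab lab a k)) ∧
        (a ∈ σ.map lab → ∀ i : Fin k, stLo lab a k st ≤ i.val →
          Sum.inr i ∈ σ'.map (indChainLab lab a k)) := by
  intro σ'
  induction σ' with
  | nil =>
    intro st M M'' h
    have h' : M'' = markSt lab a k M st := h
    refine ⟨[], stPre N lab a k M st, rfl, ?_, by simp, by simp⟩
    intro p
    subst h'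
    cases st with
    | none => exact le_refl _
    | some x =>
      obtain ⟨s, j⟩ := x
      exact Nat.le_add_right _ _
  | cons t σ' ih =>
    intro st M M'' h
    obtain ⟨hen, hrest⟩ := h
    cases st with
    | none =>
      cases t with
      | inl s =>
        -- ordinary transition
        have hfire : (indChainNet N lab a k).fire (markSt lab a k M none) (Sum.inl s)
            = markSt lab a k (N.fire M s.1) none := by
          funext q
          rcases q with p | y
          · rfl
          · rcases y with y | u <;> rfl
        rw [hfire] at hrest
        obtain ⟨σ, Mf, hrun, hle, hb, hacond⟩ := ih none (N.fire M s.1) M'' hrest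
        refine ⟨s.1 :: σ, Mf, ⟨?_, hrun⟩, hle, ?_, ?_⟩
        · intro p; exact hen (Sum.inl p)
        · intro b hb' hmem
          rcases List.mem_cons.1 hmem with h1 | h1
          · exact List.mem_cons.2 (Or.inl (show Sum.inl b = indChainLab lab a k (Sum.inl s) from by simp [indChainLab, h1]))
          · exact List.mem_cons_of_mem _ (hb b hb' h1)
        · intro hmem i hi
          have : a ∈ σ.map lab := by
            rcases List.mem_cons.1 hmem with h1 | h1
            · exact absurd h1.symm s.2
            · exact h1
          exact List.mem_cons_of_mem _ (hacond this i hi)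
      | inr si =>
        obtain ⟨s, i⟩ := si
        -- first: i = 0
        have hi0 : i.val = 0 := by
          by_contra hne
          have h1 : 1 ≤ i.val := Nat.one_le_iff_ne_zero.2 hne
          have := hen (Sum.inr (Sum.inl (s, ⟨i.val - 1, by omega⟩)))
          simp only [indChainNet, markSt, indChainExt] at this
          rw [if_pos ⟨by trivial, by omega⟩] at this
          omega
        have hpre : ∀ p, N.pre s.1 p ≤ M p := by
          intro p
          have := hen (Sum.inl p)
          simpa only [indChainNet, markSt, indChainExt, hi0, if_pos rfl, ↓reduceIte] using this
        have hfire : (indChainNet N lab a k).fire (markSt lab a k M none) (Sum.inr (s, i))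
            = markSt lab a k (fun p => M p - N.pre s.1 p) (some (s, ⟨0, by omega⟩)) := by
          funext q
          rcases q with p | y
          · simp [PetriNet.fire, indChainNet, markSt, indChainExt, hi0]
            omega
          · rcases y with ⟨s', m⟩ | u
            · simp only [PetriNet.fire, indChainNet, markSt, indChainExt, hi0]
              by_cases hs : s' = s
              · subst hs
                simp only [Prod.mk.injEq, Fin.ext_iff]
                by_cases hm : m.val = 0
                · rw [if_neg (by omega), if_pos ⟨by trivial, hm.symm⟩, if_pos ⟨by trivial, hm⟩]
                · rw [if_neg (by omega), if_neg (by simp [hm]; omega), if_neg (by simp [Fin.ext_iff]; omega)]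
              · rw [if_neg (by simp [hs]), if_neg (by simp [hs]), if_neg (by simp [Prod.ext_iff, hs])]
            · simp [PetriNet.fire, indChainNet, markSt, indChainExt, hi0]
              omega
        rw [hfire] at hrest
        obtain ⟨σ, Mf, hrun, hle, hb, hacond⟩ :=
          ih (some (s, ⟨0, by omega⟩)) (fun p => M p - N.pre s.1 p) M'' hrest
        have hstart : stPre N lab a k (fun p => M p - N.pre s.1 p) (some (s, ⟨0, by omega⟩))
            = stPre N lab a k M none := by
          funext p
          simp only [stPre]
          have := hpre p
          omega
        refine ⟨σ, Mf, firesTo_congr N hrun hstart, hle, ?_, ?_⟩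
        · intro b hb' hmem
          exact List.mem_cons_of_mem _ (hb b hb' hmem)
        · intro hmem i' _
          by_cases hi' : i'.val = 0
          · have : i' = i := Fin.ext (by omega)
            subst this
            exact List.mem_cons_self
          · exact List.mem_cons_of_mem _ (hacond hmem i' (by simp [stLo]; omega))
    | some x =>
      obtain ⟨s, j⟩ := x
      cases t with
      | inl s' =>
        exfalso
        have := hen (Sum.inr (Sum.inr ()))
        simp [indChainNet, markSt] at this
      | inr si =>
        obtain ⟨s', i⟩ := si
        have hine : i.val ≠ 0 := by
          intro hi0
          have := hen (Sum.inr (Sum.inr ()))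
          simp [indChainNet, markSt, hi0] at this
        have hkey : s' = s ∧ i.val = j.val + 1 := by
          have := hen (Sum.inr (Sum.inl (s', ⟨i.val - 1, by omega⟩)))
          simp only [indChainNet, markSt] at this
          rw [if_pos ⟨by trivial, by omega⟩] at this
          by_contra hcon
          rw [if_neg ?_] at this
          · omega
          · intro hcc
            apply hcon
            obtain ⟨h1, h2⟩ := Prod.mk.injEq .. ▸ hcc
            refine ⟨h1, ?_⟩
            have := Fin.ext_iff.1 h2
            simp at this
            omega
        have hij : i.val = j.val + 1 := hkey.2
        have hss : s = s' := hkey.1.symm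
        subst hss
        by_cases hlast : i.val = k - 1
        · -- chain completes
          have hfire : (indChainNet N lab a k).fire (markSt lab a k M (some (s, j))) (Sum.inr (s, i))
              = markSt lab a k (fun p => M p + N.post s.1 p) none := by
            funext q
            rcases q with p | y
            · simp only [PetriNet.fire, indChainNet, markSt, indChainExt]
              rw [if_neg (by omega), if_pos hlast]
              omega
            · rcases y with ⟨s'', m⟩ | u
              · have hm : m.val < k - 1 := m.isLt
                have hj : j.val < k - 1 := j.isLt
                simp only [PetriNet.fire, indChainNet, markSt, indChainExt]
                by_cases hs : s'' = s
                · simp only [hs, Prod.mk.injEq, true_and, Fin.ext_iff]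
                  split_ifs <;> omega
                · simp [Prod.mk.injEq, hs]
              · simp only [PetriNet.fire, indChainNet, markSt, indChainExt]
                rw [if_neg (by omega), if_pos hlast]
          rw [hfire] at hrest
          obtain ⟨σ, Mf, hrun, hle, hb, hacond⟩ :=
            ih none (fun p => M p + N.post s.1 p) M'' hrest
          have hstart : N.fire (stPre N lab a k M (some (s, j))) s.1
              = stPre N lab a k (fun p => M p + N.post s.1 p) none := by
            funext p
            simp only [PetriNet.fire, stPre]
            omega
          refine ⟨s.1 :: σ, Mf, ⟨?_, firesTo_congr N hrun hstart.symm⟩, hle, ?_, ?_⟩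
          · intro p
            simp only [stPre]
            exact Nat.le_add_left _ _
          · intro b hb' hmem
            rcases List.mem_cons.1 hmem with h1 | h1
            · exact absurd (h1.trans s.2) hb'
            · exact List.mem_cons_of_mem _ (hb b hb' h1)
          · intro _ i' hi'
            simp only [stLo] at hi'
            by_cases hc : i' = i
            · subst hc; exact List.mem_cons_self
            · exfalso
              have : i'.val < k := i'.isLt
              have : i'.val = k - 1 := by omega
              exact hc (Fin.ext (by omega))
        · -- chain continues
          have hjlt : i.val < k - 1 := by have := i.isLt; omega
          have hfire : (indChainNet N lab a k).fire (markSt lab a k M (some (s, j))) (Sum.inr (s, i))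
              = markSt lab a k M (some (s, ⟨i.val, hjlt⟩)) := by
            funext q
            rcases q with p | y
            · simp only [PetriNet.fire, indChainNet, markSt]
              rw [if_neg (by omega), if_neg hlast]
              omega
            · rcases y with ⟨s'', m⟩ | u
              · have hm : m.val < k - 1 := m.isLt
                have hj : j.val < k - 1 := j.isLt
                simp only [PetriNet.fire, indChainNet, markSt]
                by_cases hs : s'' = s
                · simp only [hs, Prod.mk.injEq, true_and, Fin.ext_iff]
                  split_ifs <;> omega
                · simp [Prod.mk.injEq, hs]
              · simp only [PetriNet.fire, indChainNet, markSt]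
                rw [if_neg (by omega), if_neg hlast]
          rw [hfire] at hrest
          obtain ⟨σ, Mf, hrun, hle, hb, hacond⟩ :=
            ih (some (s, ⟨i.val, hjlt⟩)) M M'' hrest
          refine ⟨σ, Mf, firesTo_congr N hrun rfl, hle, ?_, ?_⟩
          · intro b hb' hmem
            exact List.mem_cons_of_mem _ (hb b hb' hmem)
          · intro hmem i' hi'
            simp only [stLo] at hi' ⊢
            by_cases hc : i' = i
            · subst hc; exact List.mem_cons_self
            · refine List.mem_cons_of_mem _ (hacond hmem i' ?_)
              simp only [stLo]
              have : i'.val ≠ i.val := fun h => hc (Fin.ext h)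
              omega

/-- Marking of the transformed net after firing the first `j` steps of the
chain of `t`. -/
def chainMark (M : P → ℕ) (t : {s : T // lab s = a}) (j : ℕ) :
    Sum P (Sum ({s : T // lab s = a} × Fin (k - 1)) Unit) → ℕ :=
  fun q => match q with
  | Sum.inl p => M p - (if 0 < j then N.pre t.1 p else 0) + (if j = k then N.post t.1 p else 0)
  | Sum.inr (Sum.inl (s, m)) => if s = t ∧ m.val + 1 = j then 1 else 0
  | Sum.inr (Sum.inr _) => if 0 < j ∧ j < k then 0 else 1

lemma chainMark_zero (hk0 : 0 < k) (M : P → ℕ) (t : {s : T // lab s = a}) :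
    chainMark N lab a k M t 0 = indChainExt M := by
  funext q
  rcases q with p | ⟨⟨s, m⟩ | u⟩
  · simp only [chainMark, indChainExt]
    split_ifs <;> omega
  · simp [chainMark, indChainExt]
  · simp [chainMark, indChainExt]

lemma chainMark_k (hk0 : 0 < k) (M : P → ℕ) (t : {s : T // lab s = a}) :
    chainMark N lab a k M t k = indChainExt (N.fire M t.1) := by
  funext q
  rcases q with p | ⟨⟨s, m⟩ | u⟩
  · simp [chainMark, indChainExt, PetriNet.fire, hk0]
  · have := m.isLt
    simp only [chainMark, indChainExt]
    rw [if_neg (by rintro ⟨-, h⟩; omega)]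
  · simp [chainMark, indChainExt]

lemma chainStep (hk : 1 < k) (M : P → ℕ) (t : {s : T // lab s = a})
    (hen : N.enabled M t.1) (j : ℕ) (hj : j < k) :
    (indChainNet N lab a k).enabled (chainMark N lab a k M t j) (Sum.inr (t, ⟨j, hj⟩)) ∧
    (indChainNet N lab a k).fire (chainMark N lab a k M t j) (Sum.inr (t, ⟨j, hj⟩))
      = chainMark N lab a k M t (j + 1) := by
  constructor
  · intro q
    rcases q with p | ⟨⟨s, m⟩ | u⟩
    · have := hen p
      simp only [indChainNet, chainMark]
      split_ifs <;> omega
    · simp only [indChainNet, chainMark]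
      by_cases hs : s = t
      · simp only [hs, true_and]
        split_ifs <;> omega
      · simp [hs]
    · simp only [indChainNet, chainMark]
      split_ifs <;> omega
  · funext q
    rcases q with p | ⟨⟨s, m⟩ | u⟩
    · have := hen p
      simp only [PetriNet.fire, indChainNet, chainMark]
      split_ifs <;> omega
    · have := m.isLt
      simp only [PetriNet.fire, indChainNet, chainMark]
      by_cases hs : s = t
      · simp only [hs, true_and]
        split_ifs <;> omega
      · simp [hs]
    · simp only [PetriNet.fire, indChainNet, chainMark]
      split_ifs <;> omega

/-- The segment of the chain of `t` from step `j` (length `r`). -/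
def segList (hk0 : 0 < k) (t : {s : T // lab s = a}) (j r : ℕ) :
    List (Sum {s : T // lab s ≠ a} ({s : T // lab s = a} × Fin k)) :=
  (List.range r).map (fun m => Sum.inr (t, ⟨(j + m) % k, Nat.mod_lt _ hk0⟩))

lemma segRun (hk : 1 < k) (hk0 : 0 < k) (M : P → ℕ) (t : {s : T // lab s = a})
    (hen : N.enabled M t.1) :
    ∀ r j, j + r = k →
      (indChainNet N lab a k).firesTo (chainMark N lab a k M t j)
        (segList lab a k hk0 t j r) (chainMark N lab a k M t k) := by
  intro r
  induction r with
  | zero =>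
    intro j hj
    have hjk : j = k := by omega
    subst hjk
    exact rfl
  | succ r ih =>
    intro j hj
    have hjk : j < k := by omega
    have hseg : segList lab a k hk0 t j (r + 1)
        = Sum.inr (t, ⟨j, hjk⟩) :: segList lab a k hk0 t (j + 1) r := by
      simp only [segList, List.range_succ_eq_map, List.map_cons, List.map_map]
      congr 1
      · exact congrArg _ (congrArg _ (Fin.ext (by
          show (j + 0) % k = j
          simp [Nat.mod_eq_of_lt hjk])))
      · refine List.map_congr_left fun m hm => ?_
        simp only [Function.comp_apply]
        refine congrArg _ (congrArg _ (Fin.ext ?_))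
        show (j + Nat.succ m) % k = (j + 1 + m) % k
        congr 1
        omega
    rw [hseg]
    refine ⟨(chainStep N lab a k hk M t hen j hjk).1, ?_⟩
    rw [(chainStep N lab a k hk M t hen j hjk).2]
    exact ih (j + 1) (by omega)

def expandT (hk0 : 0 < k) (t : T) :
    List (Sum {s : T // lab s ≠ a} ({s : T // lab s = a} × Fin k)) :=
  if h : lab t = a then segList lab a k hk0 ⟨t, h⟩ 0 k else [Sum.inl ⟨t, h⟩]

def expand (hk0 : 0 < k) :
    List T → List (Sum {s : T // lab s ≠ a} ({s : T // lab s = a} × Fin k))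
  | [] => []
  | t :: σ => expandT lab a k hk0 t ++ expand hk0 σ

lemma expand_run (hk : 1 < k) (hk0 : 0 < k) :
    ∀ (σ : List T) (M M' : P → ℕ), N.firesTo M σ M' →
      (indChainNet N lab a k).firesTo (indChainExt M) (expand lab a k hk0 σ)
        (indChainExt M') := by
  intro σ
  induction σ with
  | nil =>
    intro M M' h
    have h' : M' = M := h
    subst h'
    exact rfl
  | cons t σ ih =>
    intro M M' h
    show (indChainNet N lab a k).firesTo (indChainExt M)
      (expandT lab a k hk0 t ++ expand lab a k hk0 σ) (indChainExt M')
    refine firesTo_append _ _ ?_ (ih _ _ h.2)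
    by_cases hla : lab t = a
    · rw [expandT, dif_pos hla]
      have := segRun N lab a k hk hk0 M ⟨t, hla⟩ h.1 k 0 (by omega)
      rwa [chainMark_zero N lab a k hk0, chainMark_k N lab a k hk0] at this
    · rw [expandT, dif_neg hla]
      have hfire : (indChainNet N lab a k).fire (indChainExt M) (Sum.inl ⟨t, hla⟩)
          = indChainExt (N.fire M t) := by
        funext q
        rcases q with p | ⟨y | u⟩ <;> rfl
      exact ⟨fun q => by
        rcases q with p | ⟨y | u⟩
        · exact h.1 p
        · exact Nat.zero_le _
        · exact le_refl 1, hfire.symm⟩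

lemma expand_mem_inl (hk0 : 0 < k) :
    ∀ (σ : List T) (b : E),
      Sum.inl b ∈ (expand lab a k hk0 σ).map (indChainLab lab a k) → b ∈ σ.map lab := by
  intro σ
  induction σ with
  | nil => intro b h; simp [expand] at h
  | cons t σ ih =>
    intro b h
    rw [show expand lab a k hk0 (t :: σ) = expandT lab a k hk0 t ++ expand lab a k hk0 σ
        from rfl, List.map_append, List.mem_append] at h
    rcases h with h | h
    · rw [expandT] at h
      split_ifs at h with hla
      · exfalso
        simp [segList, indChainLab] at h
      · simp only [List.map_cons, List.map_nil, indChainLab, List.mem_singleton] at h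
        rw [List.map_cons]
        exact List.mem_cons.2 (Or.inl (Sum.inl.inj h))
    · exact List.mem_cons_of_mem _ (ih b h)

lemma expand_mem_inr (hk0 : 0 < k) :
    ∀ (σ : List T) (i : Fin k),
      Sum.inr i ∈ (expand lab a k hk0 σ).map (indChainLab lab a k) → a ∈ σ.map lab := by
  intro σ
  induction σ with
  | nil => intro i h; simp [expand] at h
  | cons t σ ih =>
    intro i h
    rw [show expand lab a k hk0 (t :: σ) = expandT lab a k hk0 t ++ expand lab a k hk0 σ
        from rfl, List.map_append, List.mem_append] at h
    rcases h with h | h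
    · rw [expandT] at h
      split_ifs at h with hla
      · rw [List.map_cons]
        exact List.mem_cons.2 (Or.inl hla.symm)
      · exfalso
        simp [indChainLab] at h
    · exact List.mem_cons_of_mem _ (ih i h)

lemma a_mem_expand (hk0 : 0 < k) :
    ∀ (σ : List T) (i : Fin k), a ∈ σ.map lab →
      Sum.inr i ∈ (expand lab a k hk0 σ).map (indChainLab lab a k) := by
  intro σ
  induction σ with
  | nil => intro i h; simp at h
  | cons t σ ih =>
    intro i h
    rw [show expand lab a k hk0 (t :: σ) = expandT lab a k hk0 t ++ expand lab a k hk0 σ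
        from rfl, List.map_append, List.mem_append]
    rw [List.map_cons, List.mem_cons] at h
    by_cases hla : lab t = a
    · left
      rw [expandT, dif_pos hla]
      simp only [segList, List.map_map, List.mem_map, Function.comp]
      refine ⟨i.val, by simp [List.mem_range, i.isLt], ?_⟩
      simp [indChainLab]
      exact Fin.ext (by simp [Nat.mod_eq_of_lt i.isLt])
    · right
      rcases h with h | h
      · exact absurd h.symm hla
      · exact ih i h

lemma sum_union_split {β : Type*} [AddCommMonoid β]
    (f : Sum E (Fin k) → β) (s : Finset E) :
    ∑ b ∈ (s.image Sum.inl ∪ Finset.univ.image Sum.inr), f b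
      = (∑ b ∈ s, f (Sum.inl b)) + ∑ i : Fin k, f (Sum.inr i) := by
  have hd : Disjoint (s.image Sum.inl)
      ((Finset.univ : Finset (Fin k)).image Sum.inr) := by
    rw [Finset.disjoint_left]
    rintro x hx hx'
    obtain ⟨b, -, rfl⟩ := Finset.mem_image.1 hx
    obtain ⟨i, -, h⟩ := Finset.mem_image.1 hx'
    cases h
  rw [Finset.sum_union hd, Finset.sum_image (fun x _ y _ h => Sum.inl.inj h),
      Finset.sum_image (fun x _ y _ h => Sum.inr.inj h)]

end Main

end IndChainAux

/-- replacing each `a`-labeled transition (where `γ a = k > 1`)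
by an atomic chain of `k` transitions carrying `k` fresh labels `a_1, …, a_k`
with uniform clearance `1`, costs `c(a_1) = c(a)`, `c(a_i) = 0` for `i > 1`,
and replacing `a` in the policy by `a_1, …, a_k`, preserves indicator-validity
and the cost of the policy. -/
theorem indChain_valid_iff_and_cost {P T E : Type*} [DecidableEq T] [DecidableEq E]
    (N : PetriNet P T) (lab : T → E) (M : P → ℕ) (ℓ : P → ℕ) (γ : E → ℕ)
    (c : E → NNReal) (a : E) (k : ℕ) (hk : 1 < k) (hγ : γ a = k)
    (Pol : Finset E) (ha : a ∈ Pol) :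
    (IndicatorValid N lab M ℓ γ Pol ↔
      IndicatorValid (indChainNet N lab a k) (indChainLab lab a k)
        (indChainExt M)
        (fun q => match q with
          | Sum.inl p => ℓ p
          | Sum.inr _ => 0)
        (fun b => match b with
          | Sum.inl e => γ e
          | Sum.inr _ => 1)
        ((Pol.erase a).image Sum.inl ∪ Finset.univ.image Sum.inr)) ∧
    (∑ b ∈ Pol, c b) =
      ∑ b ∈ ((Pol.erase a).image Sum.inl ∪ Finset.univ.image Sum.inr : Finset (Sum E (Fin k))),
        (fun b => match b with
          | Sum.inl e => c e
          | Sum.inr i => if i.val = 0 then c a else 0) b := by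
  have hk0 : 0 < k := by omega
  constructor
  · constructor
    · -- original valid → transformed valid
      intro hval σ' M'' hrun q hq
      rcases q with p | x
      · obtain ⟨σ, Mf, hrunO, hle, hbcond, hacond⟩ :=
          IndChainAux.proj N lab a k hk σ' none M M'' hrun
        have hpos : 0 < Mf p := lt_of_lt_of_le hq (hle p)
        have h1 := hval σ Mf hrunO p hpos
        refine le_trans h1 ?_
        rw [← Finset.add_sum_erase Pol _ ha]
        refine le_trans (add_le_add ?_ ?_)
          (le_of_eq ((add_comm _ _).trans (IndChainAux.sum_union_split _ _ _).symm))
        · -- γ a * χ_a ≤ ∑ i, contribution of a_i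
          by_cases hmem : a ∈ σ.map lab
          · rw [if_pos hmem, mul_one, hγ]
            have hall : ∀ i : Fin k, Sum.inr i ∈ σ'.map (indChainLab lab a k) :=
              fun i => hacond hmem i (Nat.zero_le _)
            calc (k : ℕ) = ∑ _i : Fin k, 1 := by simp
            _ ≤ _ := Finset.sum_le_sum fun i _ => by
                rw [if_pos (hall i)]
                exact Nat.le_refl _
          · rw [if_neg hmem, mul_zero]
            exact Nat.zero_le _
        · refine Finset.sum_le_sum fun b hb => ?_
          have hbne : b ≠ a := Finset.ne_of_mem_erase hb
          by_cases hmem : b ∈ σ.map lab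
          · rw [if_pos hmem, if_pos (hbcond b hbne hmem)]
          · rw [if_neg hmem, mul_zero]
            exact Nat.zero_le _
      · exact Nat.zero_le _
    · -- transformed valid → original valid
      intro hval σ M' hrun p hp
      have hrun' := IndChainAux.expand_run N lab a k hk hk0 σ M M' hrun
      have h1 := hval (IndChainAux.expand lab a k hk0 σ) (indChainExt M') hrun' (Sum.inl p) hp
      refine le_trans h1 ?_
      rw [← Finset.add_sum_erase Pol _ ha]
      refine le_trans
        (le_of_eq ((IndChainAux.sum_union_split _ _ _).trans (add_comm _ _)))
        (add_le_add ?_ ?_)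
      · -- ∑ i, contribution of a_i ≤ γ a * χ_a
        by_cases hmem : a ∈ σ.map lab
        · rw [if_pos hmem, mul_one, hγ]
          calc _ ≤ ∑ _i : Fin k, 1 := Finset.sum_le_sum fun i _ => by
                rcases Classical.em (Sum.inr i ∈
                    (IndChainAux.expand lab a k hk0 σ).map (indChainLab lab a k)) with h | h
                · rw [if_pos h]
                  exact Nat.le_refl _
                · rw [if_neg h]
                  exact le_trans (le_of_eq (mul_zero _)) (Nat.zero_le _)
          _ = (k : ℕ) := by simp
        · rw [if_neg hmem, mul_zero]
          refine le_of_eq (Finset.sum_eq_zero fun i _ => ?_)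
          have hno : Sum.inr i ∉ (IndChainAux.expand lab a k hk0 σ).map (indChainLab lab a k) :=
            fun hi => hmem (IndChainAux.expand_mem_inr lab a k hk0 σ i hi)
          rw [if_neg hno, mul_zero]
      · refine Finset.sum_le_sum fun b hb => ?_
        rcases Classical.em (Sum.inl b ∈
            (IndChainAux.expand lab a k hk0 σ).map (indChainLab lab a k)) with hmem | hmem
        · rw [if_pos hmem, if_pos (IndChainAux.expand_mem_inl lab a k hk0 σ b hmem)]
        · rw [if_neg hmem, mul_zero]
          exact Nat.zero_le _
  · -- costs agree
    have h1 : (∑ b ∈ ((Pol.erase a).image Sum.inl ∪ Finset.univ.image Sum.inr :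
          Finset (Sum E (Fin k))),
        (fun b => match b with
          | Sum.inl e => c e
          | Sum.inr i => if i.val = 0 then c a else 0) b)
        = (∑ b ∈ Pol.erase a, c b) + ∑ i : Fin k, (if (i : Fin k).val = 0 then c a else 0) :=
      IndChainAux.sum_union_split _ _ _
    have h2 : (∑ i : Fin k, (if (i : Fin k).val = 0 then c a else 0)) = c a := by
      rw [Finset.sum_eq_single (⟨0, hk0⟩ : Fin k)]
      · simp
      · intro i _ hne
        exact if_neg fun h0 => hne (Fin.ext (by simpa using h0))
      · intro h
        exact absurd (Finset.mem_univ _) h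
    rw [h1, h2, ← Finset.add_sum_erase Pol c ha, add_comm]
end
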